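/- The double domination number of the fractal cubic network satisfies γ_×2(FCN(1)) = 12 and γ_×2(FCN(l)) = 4·(γ_×2(FCN(l−1)) − 1) for all l ≥ 2. -/

import Mathlib

open SimpleGraph

variable {V : Type*}

/-- `D` is a dominating set of `G`: every vertex is in `D` or adjacent to a vertex of `D`. -/
def IsDominating (G : SimpleGraph V) (D : Set V) : Prop :=
  ∀ u : V, u ∈ D ∨ ∃ d ∈ D, G.Adj u d

/-- `D` is a total dominating set of `G`: every vertex has a neighbor in `D`. -/
def IsTotalDominating (G : SimpleGraph V) (D : Set V) : Prop :=
  ∀ u : V, ∃ d ∈ D, G.Adj u d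

/-- `R` is a resolving set of `G`. -/
def IsResolving (G : SimpleGraph V) (R : Set V) : Prop :=
  ∀ u v : V, u ≠ v → ∃ r ∈ R, G.dist u r ≠ G.dist v r

/-- `D` is an independent set of `G`. -/
def IsIndependentSet (G : SimpleGraph V) (D : Set V) : Prop :=
  ∀ u ∈ D, ∀ v ∈ D, ¬ G.Adj u v

/-- the subgraph of `G` induced by `D` is connected. -/
def InducedConnected (G : SimpleGraph V) (D : Set V) : Prop :=
  (G.induce D).Connected

/-- closed neighborhood -/
def closedNbhd (G : SimpleGraph V) (u : V) : Set V :=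
  insert u (G.neighborSet u)

/-- `D` is a double dominating set of `G`: `|N[u] ∩ D| ≥ 2` for every vertex `u`. -/
def IsDoubleDominating (G : SimpleGraph V) (D : Set V) : Prop :=
  ∀ u : V, 2 ≤ (closedNbhd G u ∩ D).ncard

/-- `D` is a 2-dominating set of `G`: every vertex outside `D` has ≥ 2 neighbors in `D`. -/
def IsTwoDominating (G : SimpleGraph V) (D : Set V) : Prop :=
  ∀ u : V, u ∉ D → 2 ≤ (G.neighborSet u ∩ D).ncard

/-- minimum cardinality of a set of vertices satisfying `P`. -/
noncomputable def minCard (P : Set V → Prop) : ℕ :=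
  sInf {n : ℕ | ∃ D : Set V, P D ∧ D.ncard = n}

noncomputable def gamma (G : SimpleGraph V) : ℕ := minCard (IsDominating G)
noncomputable def gammaT (G : SimpleGraph V) : ℕ := minCard (IsTotalDominating G)
noncomputable def gammaC (G : SimpleGraph V) : ℕ :=
  minCard (fun D => IsDominating G D ∧ InducedConnected G D)
noncomputable def gammaI (G : SimpleGraph V) : ℕ :=
  minCard (fun D => IsDominating G D ∧ IsIndependentSet G D)
noncomputable def gammaX2 (G : SimpleGraph V) : ℕ := minCard (IsDoubleDominating G)
noncomputable def gamma2 (G : SimpleGraph V) : ℕ := minCard (IsTwoDominating G)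
noncomputable def mdim (G : SimpleGraph V) : ℕ := minCard (IsResolving G)
noncomputable def gammaR (G : SimpleGraph V) : ℕ :=
  minCard (fun D => IsDominating G D ∧ IsResolving G D)
noncomputable def gammaRI (G : SimpleGraph V) : ℕ :=
  minCard (fun D => IsDominating G D ∧ IsIndependentSet G D ∧ IsResolving G D)
noncomputable def gammaRT (G : SimpleGraph V) : ℕ :=
  minCard (fun D => IsTotalDominating G D ∧ IsResolving G D)
noncomputable def gammaRC (G : SimpleGraph V) : ℕ :=
  minCard (fun D => IsDominating G D ∧ InducedConnected G D ∧ IsResolving G D)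

/-- `u` and `v` are twins: `N(u) = N(v)` or `N[u] = N[v]`. -/
def AreTwins (G : SimpleGraph V) (u v : V) : Prop :=
  G.neighborSet u = G.neighborSet v ∨ closedNbhd G u = closedNbhd G v

/-- The rooted product `Γ ∘_v Ω`: a copy of `Ω` is attached at its root `v`
to every vertex of `Γ`. -/
def rootedProduct {α β : Type*} (Γ : SimpleGraph α) (Ω : SimpleGraph β) (v : β) :
    SimpleGraph (α × β) where
  Adj p q := (p.2 = v ∧ q.2 = v ∧ Γ.Adj p.1 q.1) ∨ (p.1 = q.1 ∧ Ω.Adj p.2 q.2)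
  symm := by
    constructor
    intro p q h
    rcases h with ⟨h1, h2, h3⟩ | ⟨h1, h2⟩
    · exact Or.inl ⟨h2, h1, h3.symm⟩
    · exact Or.inr ⟨h1.symm, h2.symm⟩
  loopless := by
    constructor
    intro p h
    rcases h with ⟨_, _, h⟩ | ⟨_, h⟩ <;> exact h.ne rfl

/-- Vertex type of the fractal cubic network `FCN l`. -/
def FCNVert : ℕ → Type
  | 0 => Fin 4
  | (l + 1) => Fin 4 × FCNVert l

/-- Auxiliary vertex `(01)^{l+1}` of `FCN l` (labels `00,01,11,10` ↦ `0,1,2,3`). -/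
def fcnAux : (l : ℕ) → FCNVert l
  | 0 => ((1 : Fin 4) : FCNVert 0)
  | (l + 1) => (((1 : Fin 4), fcnAux l) : FCNVert (l + 1))

/-- The designated root `10(01)^l` of `FCN l`. -/
def fcnRoot : (l : ℕ) → FCNVert l
  | 0 => ((3 : Fin 4) : FCNVert 0)
  | (l + 1) => (((3 : Fin 4), fcnAux l) : FCNVert (l + 1))

/-- The fractal cubic network: `FCN 0 = C₄` and
`FCN (l+1) = C₄ ∘_v FCN l`, rooted at the designated root of `FCN l`. -/
def FCN : (l : ℕ) → SimpleGraph (FCNVert l)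
  | 0 => cycleGraph 4
  | (l + 1) => rootedProduct (cycleGraph 4) (FCN l) (fcnRoot l)

/-!
Away from the four copy roots, a closed neighbourhood of `FCN (l + 1)` lies inside one copy of
`FCN l`, so a set double dominating `FCN (l + 1)` restricts, in every copy, to a set double
dominating `FCN l` off its root. Let `b l` and `a l` be the least sizes of sets double dominating
`FCN l` off the root, respectively off the root and `fcnAux l`. The root of `FCN (l + 1)` is
`fcnAux l` in copy 3 and its `fcnAux` is `fcnAux l` in copy 1, so
`b (l + 1) = 3 b l + a l` and `a (l + 1) = 2 b l + 2 a l`; from `b 0 = 3`, `a 0 = 2` we get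
`b = a + 1`. Optimal sets can be chosen to contain the root (and `fcnAux`), and the copy roots of
four glued copies double dominate each other along the 4-cycle, so `γ×2 (FCN (l + 1)) = 4 b l`.
-/

def DoublyDominates (G : SimpleGraph V) (D : Set V) (u : V) : Prop :=
  2 ≤ (closedNbhd G u ∩ D).ncard

lemma two_le_ncard_of_doublyDominates [Finite V] {G : SimpleGraph V} {D : Set V} {u : V}
    (h : DoublyDominates G D u) : 2 ≤ D.ncard :=
  h.trans (Set.ncard_le_ncard Set.inter_subset_right)

lemma minCard_eq {P : Set V → Prop} {n : ℕ} (hex : ∃ D, P D ∧ D.ncard = n)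
    (hle : ∀ D, P D → n ≤ D.ncard) : minCard P = n :=
  le_antisymm (Nat.sInf_le hex) (le_csInf ⟨n, hex⟩ fun _ ⟨D, hD, hDn⟩ => hDn ▸ hle D hD)

lemma Set.ncard_eq_sum_ncard_preimage_mk {α β : Type*} [Fintype α] [Finite β]
    (S : Set (α × β)) :
    S.ncard = ∑ i, (Prod.mk i ⁻¹' S).ncard := by
  let e : S ≃ Σ i, (Prod.mk i ⁻¹' S : Set β) :=
    ⟨fun p => ⟨p.1.1, p.1.2, p.2⟩, fun q => ⟨(q.1, q.2.1), q.2.2⟩, fun _ => rfl,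
      fun _ => rfl⟩
  simp only [← Nat.card_coe_set_eq, Nat.card_congr e, Nat.card_sigma]

lemma Set.ncard_setOf_snd_mem {α β : Type*} [Fintype α] [Finite β] (T : α → Set β) :
    {p : α × β | p.2 ∈ T p.1}.ncard = ∑ i, (T i).ncard :=
  Set.ncard_eq_sum_ncard_preimage_mk _

section RootedProduct

variable {α β : Type*} {Γ : SimpleGraph α} {Ω : SimpleGraph β} {v : β}

lemma closedNbhd_rootedProduct_of_ne {x : β} (hx : x ≠ v) (i : α) :
    closedNbhd (rootedProduct Γ Ω v) (i, x) = Prod.mk i '' closedNbhd Ω x := by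
  ext ⟨j, y⟩
  simp only [closedNbhd, Set.mem_insert_iff, mem_neighborSet, rootedProduct, Prod.mk.injEq,
    Set.mem_image, hx, false_and, false_or, exists_eq_right_right]
  aesop

lemma doublyDominates_rootedProduct_iff {x : β} (hx : x ≠ v) (i : α) (S : Set (α × β)) :
    DoublyDominates (rootedProduct Γ Ω v) S (i, x) ↔
      DoublyDominates Ω (Prod.mk i ⁻¹' S) x := by
  rw [DoublyDominates, DoublyDominates, closedNbhd_rootedProduct_of_ne hx,
    ← Set.image_inter_preimage, Set.ncard_image_of_injective _ (Prod.mk_right_injective i)]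

lemma doublyDominates_rootedProduct_root [Finite α] [Finite β] {S : Set (α × β)} {i j : α}
    (hij : Γ.Adj i j) (hi : (i, v) ∈ S) (hj : (j, v) ∈ S) :
    DoublyDominates (rootedProduct Γ Ω v) S (i, v) := by
  have hsub : {(i, v), (j, v)} ⊆ closedNbhd (rootedProduct Γ Ω v) (i, v) ∩ S := by
    rintro p (rfl | rfl)
    · exact ⟨Set.mem_insert _ _, hi⟩
    · exact ⟨Set.mem_insert_of_mem _ (Or.inl ⟨rfl, rfl, hij⟩), hj⟩
  calc 2 = ({(i, v), (j, v)} : Set (α × β)).ncard := by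
        rw [Set.ncard_pair (by simpa using hij.ne)]
    _ ≤ _ := Set.ncard_le_ncard hsub

lemma doublyDominates_rootedProduct_of_forall [Finite α] [Finite β] {T : α → Set β}
    (hΓ : ∀ i, ∃ j, Γ.Adj i j) (hv : ∀ i, v ∈ T i) {i : α} {x : β}
    (hT : x ≠ v → DoublyDominates Ω (T i) x) :
    DoublyDominates (rootedProduct Γ Ω v) {p | p.2 ∈ T p.1} (i, x) := by
  by_cases hx : x = v
  · obtain ⟨j, hij⟩ := hΓ i
    subst hx
    exact doublyDominates_rootedProduct_root hij (hv i) (hv j)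
  · exact (doublyDominates_rootedProduct_iff hx i _).2 (hT hx)

end RootedProduct

section CycleGraphFour

lemma cycleGraph_four_exists_adj : ∀ i : Fin 4, ∃ j, (cycleGraph 4).Adj i j := by
  decide

lemma doublyDominates_cycleGraph_four_iff (F : Finset (Fin 4)) (x : Fin 4) :
    DoublyDominates (cycleGraph 4) F x ↔
      2 ≤ (({x - 1, x, x + 1} : Finset (Fin 4)) ∩ F).card := by
  have hadj : ∀ y : Fin 4, (cycleGraph 4).Adj x y ↔ y = x - 1 ∨ y = x + 1 := by
    revert x; decide
  have hN : closedNbhd (cycleGraph 4) x = ↑({x - 1, x, x + 1} : Finset (Fin 4)) := by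
    ext y
    simp only [closedNbhd, Set.mem_insert_iff, mem_neighborSet, hadj, Finset.coe_insert,
      Finset.coe_singleton, Set.mem_singleton_iff]
    tauto
  rw [DoublyDominates, hN, ← Finset.coe_inter, Set.ncard_coe_finset]

lemma three_le_ncard_of_doublyDominates_cycleGraph_four {S : Set (Fin 4)}
    (h0 : DoublyDominates (cycleGraph 4) S 0) (h1 : DoublyDominates (cycleGraph 4) S 1)
    (h2 : DoublyDominates (cycleGraph 4) S 2) : 3 ≤ S.ncard := by
  classical
  rw [← S.coe_toFinset, Set.ncard_coe_finset]
  rw [← S.coe_toFinset, doublyDominates_cycleGraph_four_iff] at h0 h1 h2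
  revert h0 h1 h2
  generalize S.toFinset = F
  revert F
  decide

lemma doublyDominates_cycleGraph_four_pair :
    ∀ u : Fin 4, u ≠ 3 → u ≠ 1 → DoublyDominates (cycleGraph 4) {3, 1} u := by
  rw [← Finset.coe_pair]
  simp only [doublyDominates_cycleGraph_four_iff]
  decide

lemma doublyDominates_cycleGraph_four_triple :
    ∀ u : Fin 4, u ≠ 3 → DoublyDominates (cycleGraph 4) {3, 0, 1} u := by
  rw [← Finset.coe_pair, ← Finset.coe_insert]
  simp only [doublyDominates_cycleGraph_four_iff]
  decide

end CycleGraphFour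

section FCN

instance instFiniteFCNVert : (l : ℕ) → Finite (FCNVert l)
  | 0 => inferInstanceAs (Finite (Fin 4))
  | l + 1 => have := instFiniteFCNVert l; inferInstanceAs (Finite (Fin 4 × FCNVert l))

lemma FCNVert.mk_ne_mk_of_ne_left {l : ℕ} {i j : Fin 4} (h : i ≠ j) (x y : FCNVert l) :
    @Ne (FCNVert (l + 1)) (i, x) (j, y) :=
  fun e => h (congrArg Prod.fst e)

lemma FCNVert.mk_ne_mk_of_ne_right {l : ℕ} (i : Fin 4) {x y : FCNVert l} (h : x ≠ y) :
    @Ne (FCNVert (l + 1)) (i, x) (i, y) :=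
  fun e => h (congrArg Prod.snd e)

/-- The least size of a set double dominating `FCN l` off `fcnRoot l` and `fcnAux l`;
double dominating `fcnAux l` as well costs exactly one vertex more. -/
def fcnBound : ℕ → ℕ
  | 0 => 2
  | l + 1 => 4 * fcnBound l + 2

lemma FCN.doublyDominates_slice {l : ℕ} {S : Set (FCNVert (l + 1))} {i : Fin 4}
    {x : FCNVert l} (hx : x ≠ fcnRoot l) (h : DoublyDominates (FCN (l + 1)) S (i, x)) :
    DoublyDominates (FCN l) (Prod.mk i ⁻¹' S) x :=
  (doublyDominates_rootedProduct_iff hx i S).1 h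

lemma FCN.ncard_eq_sum_slices {l : ℕ} (S : Set (FCNVert (l + 1))) :
    S.ncard = ∑ i, (Prod.mk i ⁻¹' S).ncard :=
  Set.ncard_eq_sum_ncard_preimage_mk (α := Fin 4) (β := FCNVert l) S

theorem FCN.fcnBound_le_ncard (l : ℕ) :
    (∀ S : Set (FCNVert l),
      (∀ u, u ≠ fcnRoot l → u ≠ fcnAux l → DoublyDominates (FCN l) S u) →
      fcnBound l ≤ S.ncard) ∧
    (∀ S : Set (FCNVert l), (∀ u, u ≠ fcnRoot l → DoublyDominates (FCN l) S u) →
      fcnBound l + 1 ≤ S.ncard) := by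
  induction l with
  | zero =>
    have h03 : (0 : Fin 4) ≠ 3 := by decide
    have h13 : (1 : Fin 4) ≠ 3 := by decide
    have h23 : (2 : Fin 4) ≠ 3 := by decide
    have h01 : (0 : Fin 4) ≠ 1 := by decide
    exact ⟨fun S hS => two_le_ncard_of_doublyDominates (hS _ h03 h01),
      fun S hS =>
        three_le_ncard_of_doublyDominates_cycleGraph_four (hS _ h03) (hS _ h13) (hS _ h23)⟩
  | succ l ih =>
    obtain ⟨hA, hB⟩ := ih
    have hne := @FCNVert.mk_ne_mk_of_ne_left l
    have hne' := @FCNVert.mk_ne_mk_of_ne_right l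
    constructor
    · intro S hS
      have c0 := hB _ fun x hx => FCN.doublyDominates_slice (i := 0) hx
        (hS _ (hne (by decide) _ _) (hne (by decide) _ _))
      have c1 := hA _ fun x hx hx' => FCN.doublyDominates_slice (i := 1) hx
        (hS _ (hne (by decide) _ _) (hne' _ hx'))
      have c2 := hB _ fun x hx => FCN.doublyDominates_slice (i := 2) hx
        (hS _ (hne (by decide) _ _) (hne (by decide) _ _))
      have c3 := hA _ fun x hx hx' => FCN.doublyDominates_slice (i := 3) hx
        (hS _ (hne' _ hx') (hne (by decide) _ _))
      rw [FCN.ncard_eq_sum_slices, Fin.sum_univ_four, fcnBound]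
      omega
    · intro S hS
      have c0 := hB _ fun x hx => FCN.doublyDominates_slice (i := 0) hx (hS _ (hne (by decide) _ _))
      have c1 := hB _ fun x hx => FCN.doublyDominates_slice (i := 1) hx (hS _ (hne (by decide) _ _))
      have c2 := hB _ fun x hx => FCN.doublyDominates_slice (i := 2) hx (hS _ (hne (by decide) _ _))
      have c3 := hA _ fun x hx hx' => FCN.doublyDominates_slice (i := 3) hx (hS _ (hne' _ hx'))
      rw [FCN.ncard_eq_sum_slices, Fin.sum_univ_four, fcnBound]
      omega

lemma FCN.doublyDominates_succ_of_forall {l : ℕ} {T : Fin 4 → Set (FCNVert l)}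
    (hv : ∀ i, fcnRoot l ∈ T i) {i : Fin 4} {x : FCNVert l}
    (h : x ≠ fcnRoot l → DoublyDominates (FCN l) (T i) x) :
    DoublyDominates (FCN (l + 1)) {p : Fin 4 × FCNVert l | p.2 ∈ T p.1} (i, x) :=
  doublyDominates_rootedProduct_of_forall cycleGraph_four_exists_adj hv h

theorem FCN.exists_ncard_eq_fcnBound (l : ℕ) :
    (∃ S : Set (FCNVert l), fcnRoot l ∈ S ∧ fcnAux l ∈ S ∧
      (∀ u, u ≠ fcnRoot l → u ≠ fcnAux l → DoublyDominates (FCN l) S u) ∧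
      S.ncard = fcnBound l) ∧
    (∃ S : Set (FCNVert l), fcnRoot l ∈ S ∧
      (∀ u, u ≠ fcnRoot l → DoublyDominates (FCN l) S u) ∧ S.ncard = fcnBound l + 1) := by
  induction l with
  | zero =>
    have h30 : (3 : Fin 4) ≠ 0 := by decide
    have h31 : (3 : Fin 4) ≠ 1 := by decide
    have h01 : (0 : Fin 4) ≠ 1 := by decide
    exact ⟨⟨({3, 1} : Set (Fin 4)), Set.mem_insert _ _, Set.mem_insert_of_mem _ rfl,
        doublyDominates_cycleGraph_four_pair, Set.ncard_pair h31⟩,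
      ⟨({3, 0, 1} : Set (Fin 4)), Set.mem_insert _ _, doublyDominates_cycleGraph_four_triple,
        Set.ncard_eq_three.2 ⟨_, _, _, h30, h31, h01, rfl⟩⟩⟩
  | succ l ih =>
    obtain ⟨⟨SA, hrA, haA, hA, hcA⟩, ⟨SB, hrB, hB, hcB⟩⟩ := ih
    constructor
    · refine ⟨{p : Fin 4 × FCNVert l | p.2 ∈ ![SB, SA, SB, SA] p.1}, haA, haA, ?_, ?_⟩
      · rintro ⟨i, x⟩ h1 h2
        refine FCN.doublyDominates_succ_of_forall (fun i => by fin_cases i <;> assumption)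
          fun hx => ?_
        fin_cases i
        · exact hB x hx
        · exact hA x hx fun e => h2 (by rw [e]; rfl)
        · exact hB x hx
        · exact hA x hx fun e => h1 (by rw [e]; rfl)
      · refine (Set.ncard_setOf_snd_mem (α := Fin 4) (β := FCNVert l) _).trans ?_
        rw [Fin.sum_univ_four, fcnBound]
        simp only [Matrix.cons_val_zero, Matrix.cons_val_one, Matrix.cons_val, hcA, hcB]
        omega
    · refine ⟨{p : Fin 4 × FCNVert l | p.2 ∈ ![SB, SB, SB, SA] p.1}, haA, ?_, ?_⟩
      · rintro ⟨i, x⟩ h1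
        refine FCN.doublyDominates_succ_of_forall (fun i => by fin_cases i <;> assumption)
          fun hx => ?_
        fin_cases i
        · exact hB x hx
        · exact hB x hx
        · exact hB x hx
        · exact hA x hx fun e => h1 (by rw [e]; rfl)
      · refine (Set.ncard_setOf_snd_mem (α := Fin 4) (β := FCNVert l) _).trans ?_
        rw [Fin.sum_univ_four, fcnBound]
        simp only [Matrix.cons_val_zero, Matrix.cons_val_one, Matrix.cons_val, hcA, hcB]
        omega

end FCN

theorem gammaX2_FCN_succ (l : ℕ) : gammaX2 (FCN (l + 1)) = 4 * (fcnBound l + 1) := by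
  obtain ⟨-, S, hroot, hS, hcard⟩ := FCN.exists_ncard_eq_fcnBound l
  refine minCard_eq ⟨{p : Fin 4 × FCNVert l | p.2 ∈ S}, ?_, ?_⟩ fun D hD => ?_
  · rintro ⟨i, x⟩
    exact FCN.doublyDominates_succ_of_forall (T := fun _ => S) (fun _ => hroot) (hS x)
  · refine (Set.ncard_setOf_snd_mem (α := Fin 4) (β := FCNVert l) fun _ => S).trans ?_
    simp [hcard]
  · have hslice (i : Fin 4) : fcnBound l + 1 ≤ (Prod.mk i ⁻¹' D).ncard :=
      (FCN.fcnBound_le_ncard l).2 _ fun x hx => FCN.doublyDominates_slice hx (hD (i, x))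
    rw [FCN.ncard_eq_sum_slices, Fin.sum_univ_four]
    linarith [hslice 0, hslice 1, hslice 2, hslice 3]

theorem stmt18 :
    gammaX2 (FCN 1) = 12 ∧
    ∀ l : ℕ, 2 ≤ l → gammaX2 (FCN l) = 4 * (gammaX2 (FCN (l - 1)) - 1) := by
  refine ⟨gammaX2_FCN_succ 0, fun l hl => ?_⟩
  obtain ⟨k, rfl⟩ : ∃ k, l = k + 2 := ⟨l - 2, by omega⟩
  rw [show k + 2 - 1 = k + 1 from rfl, gammaX2_FCN_succ, gammaX2_FCN_succ, fcnBound]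
  omega
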